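/- arXiv:1902.06266 — 5 statements merged into one kernel-verified Lean document; each statement's English description precedes it below -/
import Mathlib

section
/- For fixed γ > 2/d (so that m_c < ∞), the map θ ↦ m_θ := ∫_{ℝ^d} f_{∞,θ}(v) dv is a strictly decreasing continuous bijection from (0, ∞) onto (0, m_c). -/
/-!
The profile `φ(t) = (exp (γ t) - 1) ^ (-1/γ)` is positive, continuous and strictly decreasing on
`t > 0`, so `θ ↦ m_θ` is strictly decreasing. The inequality `exp x - 1 ≥ x exp (x / 2)` gives
`φ(|v|²/2 + θ) ≤ C |v| ^ (-2/γ) exp (-|v|²/4)` for all `θ ≥ 0`, which is integrable on `ℝ^d`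
exactly because `2/γ < d`. Dominated convergence then makes `θ ↦ m_θ` continuous on `[0, ∞)` with
`m_0 = m_c` and `m_θ → 0` as `θ → ∞`, and the intermediate value theorem gives the bijection.
-/

open MeasureTheory Real Set Filter Topology

lemma self_mul_exp_half_le_exp_sub_one {x : ℝ} (hx : 0 ≤ x) : x * exp (x / 2) ≤ exp x - 1 := by
  have hsinh : x / 2 ≤ sinh (x / 2) := self_le_sinh_iff.2 (by positivity)
  have hexp : exp x - 1 = exp (x / 2) * (2 * sinh (x / 2)) := by
    rw [sinh_eq, mul_div_cancel₀ _ two_ne_zero, mul_sub, ← exp_add, ← exp_add]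
    norm_num
  rw [hexp, mul_comm x]
  gcongr
  linarith

/-- At `t = 0` the true value `+∞` becomes `0 ^ (-1/γ) = 0`; in `boseMass μ γ 0` this only affects
the null set `{v = 0}`. -/
noncomputable def boseProfile (γ t : ℝ) : ℝ := (exp (γ * t) - 1) ^ (-(1 / γ))

section boseProfile

variable {γ : ℝ}

lemma exp_mul_sub_one_pos (hγ : 0 < γ) {t : ℝ} (ht : 0 < t) : 0 < exp (γ * t) - 1 := by
  simpa using one_lt_exp_iff.2 (mul_pos hγ ht)

lemma boseProfile_nonneg (hγ : 0 ≤ γ) {t : ℝ} (ht : 0 ≤ t) : 0 ≤ boseProfile γ t :=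
  rpow_nonneg (sub_nonneg.2 (one_le_exp (mul_nonneg hγ ht))) _

lemma boseProfile_strictAntiOn (hγ : 0 < γ) : StrictAntiOn (boseProfile γ) (Ioi 0) :=
  fun _ hs _ _ hst => rpow_lt_rpow_of_neg (exp_mul_sub_one_pos hγ hs)
    (by gcongr) (by simpa using hγ)

lemma continuousOn_boseProfile (hγ : 0 < γ) : ContinuousOn (boseProfile γ) (Ioi 0) :=
  fun _ ht => ((continuous_exp.comp (continuous_const_mul γ)).sub continuous_const).continuousAt
    |>.rpow_const (Or.inl (exp_mul_sub_one_pos hγ ht).ne') |>.continuousWithinAt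

lemma tendsto_boseProfile_atTop (hγ : 0 < γ) : Tendsto (boseProfile γ) atTop (𝓝 0) :=
  (tendsto_rpow_neg_atTop (by positivity)).comp <| tendsto_atTop_add_const_right _ _ <|
    tendsto_exp_atTop.comp (tendsto_id.const_mul_atTop hγ)

lemma measurable_boseProfile : Measurable (boseProfile γ) := by
  unfold boseProfile; fun_prop

lemma boseProfile_le_rpow_mul_exp (hγ : 0 < γ) {t : ℝ} (ht : 0 < t) :
    boseProfile γ t ≤ (γ * t) ^ (-(1 / γ)) * exp (-(t / 2)) := by
  have hγt : 0 < γ * t := mul_pos hγ ht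
  calc boseProfile γ t ≤ (γ * t * exp (γ * t / 2)) ^ (-(1 / γ)) :=
        rpow_le_rpow_of_nonpos (by positivity) (self_mul_exp_half_le_exp_sub_one hγt.le)
          (by simpa using hγ.le)
    _ = (γ * t) ^ (-(1 / γ)) * exp (-(t / 2)) := by
        rw [mul_rpow hγt.le (exp_pos _).le, ← exp_mul]
        congr 2
        field_simp

end boseProfile

lemma integrableOn_pow_mul_boseProfile {γ θ : ℝ} (hγ : 0 < γ) {n : ℕ} (hn : 2 / γ < n)
    (hθ : 0 ≤ θ) :
    IntegrableOn (fun y : ℝ => y ^ (n - 1) • boseProfile γ (y ^ 2 / 2 + θ)) (Ioi 0) := by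
  have hs : -1 < ((n - 1 : ℕ) : ℝ) - 2 / γ := by
    have : (n : ℝ) - 1 ≤ ((n - 1 : ℕ) : ℝ) := by
      rcases n with _ | n <;> simp
    linarith
  refine Integrable.mono' ((integrableOn_rpow_mul_exp_neg_mul_sq (by norm_num : (0:ℝ) < 1 / 4)
    hs).const_mul ((γ / 2) ^ (-(1 / γ)))) (by unfold boseProfile; fun_prop) ?_
  refine (ae_restrict_iff' measurableSet_Ioi).2 (Eventually.of_forall fun y (hy : 0 < y) => ?_)
  have hy2 : 0 < y ^ 2 / 2 := by positivity
  rw [norm_smul, norm_pow, norm_of_nonneg hy.le,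
    norm_of_nonneg (boseProfile_nonneg hγ.le (by positivity))]
  calc y ^ (n - 1) * boseProfile γ (y ^ 2 / 2 + θ)
      ≤ y ^ (n - 1) * ((γ * (y ^ 2 / 2)) ^ (-(1 / γ)) * exp (-(y ^ 2 / 2 / 2))) := by
        gcongr
        exact ((boseProfile_strictAntiOn hγ).antitoneOn hy2 (mem_Ioi.2 (by positivity))
          (by linarith)).trans (boseProfile_le_rpow_mul_exp hγ hy2)
    _ = (γ / 2) ^ (-(1 / γ)) * (y ^ (((n - 1 : ℕ) : ℝ) - 2 / γ) * exp (-(1 / 4) * y ^ 2)) := by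
        rw [sub_eq_add_neg, rpow_add hy, rpow_natCast,
          show γ * (y ^ 2 / 2) = γ / 2 * y ^ 2 by ring,
          mul_rpow (by positivity) (by positivity), ← rpow_natCast y 2, ← rpow_mul hy.le,
          show ((2 : ℕ) : ℝ) * -(1 / γ) = -(2 / γ) by push_cast; ring]
        ring_nf

lemma integral_lt_integral_of_ae_lt {α : Type*} [MeasurableSpace α] {μ : Measure α} [NeZero μ]
    {f g : α → ℝ} (hf : Integrable f μ) (hg : Integrable g μ) (hlt : ∀ᵐ x ∂μ, f x < g x) :
    ∫ x, f x ∂μ < ∫ x, g x ∂μ := by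
  rw [← sub_pos, ← integral_sub hg hf]
  refine (integral_pos_iff_support_of_nonneg_ae (hlt.mono fun x hx => (sub_pos.2 hx).le)
    (hg.sub hf)).2 (pos_iff_ne_zero.2 fun h0 => ?_)
  obtain ⟨x, hx, hx0⟩ := ((measure_eq_zero_iff_ae_notMem.1 h0).and hlt).exists
  exact hx (sub_pos.2 hx0).ne'

lemma StrictAntiOn.bijOn_Ioi_Ioo {f : ℝ → ℝ} {a c : ℝ} (hanti : StrictAntiOn f (Ici c))
    (hcont : ContinuousOn f (Ici c)) (htop : Tendsto f atTop (𝓝 a)) :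
    BijOn f (Ioi c) (Ioo a (f c)) := by
  refine ⟨fun x (hx : c < x) => ⟨?_, hanti (mem_Ici.2 le_rfl) hx.le hx⟩,
    hanti.injOn.mono Ioi_subset_Ici_self, fun y ⟨hay, hyc⟩ => ?_⟩
  · have hlt : f (x + 1) < f x := hanti hx.le (mem_Ici.2 (by linarith)) (by linarith)
    refine lt_of_le_of_lt (le_of_tendsto htop ?_) hlt
    filter_upwards [eventually_ge_atTop (x + 1)] with z hz
    exact hanti.antitoneOn (mem_Ici.2 (by linarith)) (mem_Ici.2 (by linarith)) hz
  · obtain ⟨b, hby, hcb⟩ :=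
      ((htop.eventually (gt_mem_nhds hay)).and (eventually_ge_atTop c)).exists
    obtain ⟨x, hx, rfl⟩ := intermediate_value_Icc' hcb (hcont.mono Icc_subset_Ici_self)
      ⟨hby.le, hyc.le⟩
    exact ⟨x, lt_of_le_of_ne hx.1 (by rintro rfl; exact hyc.ne rfl), rfl⟩

lemma nontrivial_of_two_div_lt_finrank {E : Type*} [AddCommGroup E] [Module ℝ E] {γ : ℝ}
    (hγ : 0 < γ) (hdim : 2 / γ < Module.finrank ℝ E) : Nontrivial E :=
  Module.nontrivial_of_finrank_pos (R := ℝ) (by exact_mod_cast (div_pos two_pos hγ).trans hdim)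

noncomputable def boseMass {E : Type*} [NormedAddCommGroup E] [MeasurableSpace E]
    (μ : Measure E) (γ θ : ℝ) : ℝ :=
  ∫ v, boseProfile γ (‖v‖ ^ 2 / 2 + θ) ∂μ

section boseMass

variable {E : Type*} [NormedAddCommGroup E] [NormedSpace ℝ E] [FiniteDimensional ℝ E]
  [MeasurableSpace E] [BorelSpace E] (μ : Measure E) [μ.IsAddHaarMeasure]
  {γ : ℝ}

lemma integrable_boseProfile_norm_sq_add (hγ : 0 < γ) (hdim : 2 / γ < Module.finrank ℝ E)
    {θ : ℝ} (hθ : 0 ≤ θ) :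
    Integrable (fun v : E => boseProfile γ (‖v‖ ^ 2 / 2 + θ)) μ :=
  have := nontrivial_of_two_div_lt_finrank hγ hdim
  (integrable_fun_norm_addHaar μ (f := fun y => boseProfile γ (y ^ 2 / 2 + θ))).2
    (integrableOn_pow_mul_boseProfile hγ hdim hθ)

lemma ae_norm_sq_div_two_pos (hγ : 0 < γ) (hdim : 2 / γ < Module.finrank ℝ E) :
    ∀ᵐ v ∂μ, 0 < ‖v‖ ^ 2 / 2 := by
  have := nontrivial_of_two_div_lt_finrank hγ hdim
  filter_upwards [μ.ae_ne 0] with v hv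
  have := norm_pos_iff.2 hv
  positivity

lemma boseMass_strictAntiOn (hγ : 0 < γ) (hdim : 2 / γ < Module.finrank ℝ E) :
    StrictAntiOn (boseMass μ γ) (Ici 0) := by
  intro a (ha : 0 ≤ a) b (hb : 0 ≤ b) hab
  refine integral_lt_integral_of_ae_lt (integrable_boseProfile_norm_sq_add μ hγ hdim hb)
    (integrable_boseProfile_norm_sq_add μ hγ hdim ha) ?_
  filter_upwards [ae_norm_sq_div_two_pos μ hγ hdim] with v hv
  exact boseProfile_strictAntiOn hγ (mem_Ioi.2 (by linarith)) (mem_Ioi.2 (by linarith))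
    (by linarith)

lemma continuousOn_boseMass (hγ : 0 < γ) (hdim : 2 / γ < Module.finrank ℝ E) :
    ContinuousOn (boseMass μ γ) (Ici 0) := by
  refine continuousOn_of_dominated
    (fun _ _ => (measurable_boseProfile.comp (by fun_prop)).aestronglyMeasurable)
    (fun θ (hθ : 0 ≤ θ) => ?_) (integrable_boseProfile_norm_sq_add μ hγ hdim le_rfl) ?_
  · filter_upwards [ae_norm_sq_div_two_pos μ hγ hdim] with v hv
    rw [norm_of_nonneg (boseProfile_nonneg hγ.le (by positivity)), add_zero]
    exact (boseProfile_strictAntiOn hγ).antitoneOn hv (mem_Ioi.2 (by positivity)) (by linarith)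
  · filter_upwards [ae_norm_sq_div_two_pos μ hγ hdim] with v hv
    exact (continuousOn_boseProfile hγ).comp (continuous_const.add continuous_id).continuousOn
      fun θ (hθ : 0 ≤ θ) => add_pos_of_pos_of_nonneg hv hθ

lemma tendsto_boseMass_atTop (hγ : 0 < γ) (hdim : 2 / γ < Module.finrank ℝ E) :
    Tendsto (boseMass μ γ) atTop (𝓝 0) := by
  have hlim := tendsto_integral_filter_of_dominated_convergence (μ := μ) (l := atTop)
    (F := fun θ v => boseProfile γ (‖v‖ ^ 2 / 2 + θ)) (f := fun _ => 0) _
    (Eventually.of_forall fun _ => (measurable_boseProfile.comp (by fun_prop)).aestronglyMeasurable)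
    ?_ (integrable_boseProfile_norm_sq_add μ hγ hdim zero_le_one) ?_
  · rwa [integral_zero] at hlim
  · filter_upwards [eventually_ge_atTop 1] with θ hθ
    refine Eventually.of_forall fun v => ?_
    rw [norm_of_nonneg (boseProfile_nonneg hγ.le (by positivity))]
    exact (boseProfile_strictAntiOn hγ).antitoneOn (mem_Ioi.2 (by positivity))
      (mem_Ioi.2 (by positivity)) (by linarith)
  · exact Eventually.of_forall fun v =>
      (tendsto_boseProfile_atTop hγ).comp (tendsto_atTop_add_const_left _ _ tendsto_id)

lemma bijOn_boseMass (hγ : 0 < γ) (hdim : 2 / γ < Module.finrank ℝ E) :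
    BijOn (boseMass μ γ) (Ioi 0) (Ioo 0 (boseMass μ γ 0)) :=
  (boseMass_strictAntiOn μ hγ hdim).bijOn_Ioi_Ioo (continuousOn_boseMass μ hγ hdim)
    (tendsto_boseMass_atTop μ hγ hdim)

end boseMass

theorem stmt_4 (d : ℕ) (hd : 1 ≤ d) (γ : ℝ) (hγ : γ > 2 / (d : ℝ))
    (f : ℝ → EuclideanSpace ℝ (Fin d) → ℝ)
    (hf : ∀ θ v, f θ v = (Real.exp (γ * (‖v‖ ^ 2 / 2 + θ)) - 1) ^ (-(1 / γ)))
    (m : ℝ → ℝ) (hm : ∀ θ, m θ = ∫ v, f θ v)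
    (mc : ℝ) (hmc : mc = ∫ v : EuclideanSpace ℝ (Fin d),
      (Real.exp (γ * ‖v‖ ^ 2 / 2) - 1) ^ (-(1 / γ))) :
    StrictAntiOn m (Set.Ioi 0) ∧ ContinuousOn m (Set.Ioi 0) ∧
      Set.BijOn m (Set.Ioi 0) (Set.Ioo 0 mc) := by
  have hd0 : (0 : ℝ) < d := by exact_mod_cast hd
  have hγ0 : 0 < γ := (div_pos two_pos hd0).trans hγ
  have hdim : 2 / γ < Module.finrank ℝ (EuclideanSpace ℝ (Fin d)) := by
    rw [finrank_euclideanSpace_fin, div_lt_iff₀ hγ0, mul_comm, ← div_lt_iff₀ hd0]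
    exact hγ
  obtain rfl : m = boseMass (volume : Measure (EuclideanSpace ℝ (Fin d))) γ := funext fun θ => by
    simp only [hm, hf, boseMass, boseProfile]
  obtain rfl : mc = boseMass (volume : Measure (EuclideanSpace ℝ (Fin d))) γ 0 := by
    simp only [hmc, boseMass, boseProfile, add_zero, mul_div_assoc]
  exact ⟨(boseMass_strictAntiOn _ hγ0 hdim).mono Ioi_subset_Ici_self,
    (continuousOn_boseMass _ hγ0 hdim).mono Ioi_subset_Ici_self,
    bijOn_boseMass _ hγ0 hdim⟩
end

section
/- For θ > 0, the function f = f_{∞,θ} is a stationary solution of the nonlinear Fokker–Planck equation: Δf + div(v f (1 + f^γ)) = 0 on ℝ^d. -/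
open Real Set Finset

/-!
The profile `ψ(t) = (e^{γt} - 1)^{-1/γ}` solves `ψ' = -ψ (1 + ψ^γ)`, so
`f(v) = ψ(|v|²/2 + θ)` satisfies `∇f = -v f (1 + f^γ)`. The flux in the divergence term is
therefore `-∇f`, and the two sums cancel term by term without computing a second derivative.
-/

/-- `f_{∞,θ}(v) = steadyProfile γ (|v|²/2 + θ)`. -/
noncomputable def steadyProfile (γ t : ℝ) : ℝ := (exp (γ * t) - 1) ^ (-(1 / γ))

theorem hasDerivAt_steadyProfile {γ t : ℝ} (hγ : γ ≠ 0) (ht : 0 < γ * t) :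
    HasDerivAt (steadyProfile γ) (-(steadyProfile γ t * (1 + steadyProfile γ t ^ γ))) t := by
  have hE : 0 < exp (γ * t) - 1 := sub_pos.2 (one_lt_exp_iff.2 ht)
  have hpow : steadyProfile γ t ^ γ = (exp (γ * t) - 1)⁻¹ := by
    rw [steadyProfile, ← rpow_mul hE.le, show -(1 / γ) * γ = -1 by field_simp, rpow_neg_one]
  refine ((((hasDerivAt_id' t).const_mul γ).exp.sub_const 1).rpow_const (p := -(1 / γ))
    (Or.inl hE.ne')).congr_deriv ?_
  rw [hpow, steadyProfile, rpow_sub hE, rpow_one]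
  field_simp
  ring

theorem HasDerivAt.comp_half_norm_sq {E : Type*} [NormedAddCommGroup E] [InnerProductSpace ℝ E]
    {φ : ℝ → ℝ} {φ' : ℝ} {v : E} (hφ : HasDerivAt φ φ' (‖v‖ ^ 2 / 2)) :
    HasFDerivAt (fun w => φ (‖w‖ ^ 2 / 2)) (φ' • innerSL ℝ v) v := by
  have hhalf := hφ.comp (‖v‖ ^ 2) ((hasDerivAt_id' (‖v‖ ^ 2)).div_const (2 : ℝ))
  refine (hhalf.comp_hasFDerivAt v (hasStrictFDerivAt_norm_sq v).hasFDerivAt).congr_fderiv ?_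
  ext w
  simp only [one_div, smul_apply, coe_innerSL_apply, nsmul_eq_mul, Nat.cast_ofNat,
    smul_eq_mul]
  ring

theorem hasFDerivAt_steadyProfile_half_norm_sq_add {E : Type*} [NormedAddCommGroup E]
    [InnerProductSpace ℝ E] {γ θ : ℝ} (hγ : 0 < γ) (hθ : 0 < θ) (v : E) :
    HasFDerivAt (fun w => steadyProfile γ (‖w‖ ^ 2 / 2 + θ))
      (-(steadyProfile γ (‖v‖ ^ 2 / 2 + θ) *
          (1 + steadyProfile γ (‖v‖ ^ 2 / 2 + θ) ^ γ)) • innerSL ℝ v) v :=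
  ((hasDerivAt_steadyProfile hγ.ne' (by positivity)).comp_add_const _ θ).comp_half_norm_sq

theorem stmt_9_general (d : ℕ) (γ θ : ℝ) (hγ : 0 < γ) (hθ : 0 < θ)
    (f : EuclideanSpace ℝ (Fin d) → ℝ)
    (hf : ∀ v, f v = (Real.exp (γ * (‖v‖ ^ 2 / 2 + θ)) - 1) ^ (-(1 / γ))) :
    ∀ v : EuclideanSpace ℝ (Fin d),
      (∑ i : Fin d, fderiv ℝ (fun w => fderiv ℝ f w (EuclideanSpace.single i (1:ℝ))) v
          (EuclideanSpace.single i (1:ℝ))) +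
      (∑ i : Fin d, fderiv ℝ (fun w : EuclideanSpace ℝ (Fin d) =>
          w i * f w * (1 + f w ^ γ)) v (EuclideanSpace.single i (1:ℝ))) = 0 := by
  intro v
  have hf_eq : f = fun w => steadyProfile γ (‖w‖ ^ 2 / 2 + θ) := funext hf
  have hflux (i : Fin d) : (fun w : EuclideanSpace ℝ (Fin d) => w i * f w * (1 + f w ^ γ)) =
      fun w => -fderiv ℝ f w (EuclideanSpace.single i 1) := by
    funext w
    rw [hf_eq, (hasFDerivAt_steadyProfile_half_norm_sq_add hγ hθ w).fderiv]
    simp only [neg_smul, neg_apply, smul_apply, coe_innerSL_apply, smul_eq_mul, neg_neg,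
      EuclideanSpace.inner_single_right, conj_trivial, one_mul]
    ring
  simp only [hflux, fderiv_fun_neg, neg_apply, sum_neg_distrib, add_neg_cancel]

theorem stmt_9 (d : ℕ) (hd : 1 ≤ d) (γ θ : ℝ) (hγ : 0 < γ) (hθ : 0 < θ)
    (f : EuclideanSpace ℝ (Fin d) → ℝ)
    (hf : ∀ v, f v = (Real.exp (γ * (‖v‖ ^ 2 / 2 + θ)) - 1) ^ (-(1 / γ))) :
    ∀ v : EuclideanSpace ℝ (Fin d),
      (∑ i : Fin d, fderiv ℝ (fun w => fderiv ℝ f w (EuclideanSpace.single i (1:ℝ))) v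
          (EuclideanSpace.single i (1:ℝ))) +
      (∑ i : Fin d, fderiv ℝ (fun w : EuclideanSpace ℝ (Fin d) =>
          w i * f w * (1 + f w ^ γ)) v (EuclideanSpace.single i (1:ℝ))) = 0 :=
  stmt_9_general d γ θ hγ hθ f hf
end

section
/- Semidiscrete entropy decay: Let m, R₁, τ > 0, γ > 1, and suppose u, uⁿ : [0, m] → ℝ are C² with u' > 0, u(0) = uⁿ(0) = −R₁, u(m) = uⁿ(m) = R₁, and u satisfies the implicit Euler equation (u')^γ (u − uⁿ)/τ − (1/(γ−1)) ((u')^{γ−1})' + u((u')^γ + 1) = 0 on (0,m). Then H(u) ≤ H(uⁿ), where H(w) = ∫₀^m (|w|²/2 + Ψ(w')) dx with Ψ(s) = s Φ(1/s). -/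
open MeasureTheory Real Set intervalIntegral

lemma log_II (f : ℝ) (hf : 0 ≤ f) : IntervalIntegrable Real.log volume 0 f := by
  have hg : IntervalIntegrable (fun x : ℝ => 2 * x ^ (-(1/2) : ℝ) + (f+1)) volume 0 f :=
    ((intervalIntegrable_rpow' (by norm_num)).const_mul 2).add (intervalIntegrable_const)
  refine hg.mono_fun ?_ ?_
  · exact (measurable_log.aestronglyMeasurable).restrict
  · rw [Filter.EventuallyLE, ae_restrict_iff' measurableSet_uIoc]
    refine Filter.Eventually.of_forall (fun x hx => ?_)
    rw [uIoc_of_le hf] at hx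
    obtain ⟨hx0, hxf⟩ := hx
    have hxp : (0:ℝ) < x ^ (-(1/2) : ℝ) := rpow_pos_of_pos hx0 _
    rw [Real.norm_eq_abs, Real.norm_eq_abs]
    rw [abs_of_nonneg (by positivity : (0:ℝ) ≤ 2 * x ^ (-(1/2):ℝ) + (f+1))]
    rcases le_or_gt x 1 with h1 | h1
    · have : -Real.log x ≤ 2 * x ^ (-(1/2) : ℝ) := by
        have hlog : Real.log (x ^ (-(1/2) : ℝ)) = -(1/2) * Real.log x := Real.log_rpow hx0 _
        have := Real.log_le_sub_one_of_pos hxp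
        rw [hlog] at this
        nlinarith
      have hln : Real.log x ≤ 0 := Real.log_nonpos hx0.le h1
      rw [abs_of_nonpos hln]
      nlinarith
    · have h2 : Real.log x ≤ x - 1 := Real.log_le_sub_one_of_pos hx0
      rw [abs_of_nonneg (Real.log_nonneg h1.le)]
      nlinarith

lemma contOn_rpow {γ : ℝ} (hγ : 0 < γ) : ContinuousOn (fun s : ℝ => s ^ γ) univ :=
  fun s _ => (Real.continuousAt_rpow_const s γ (Or.inr hγ.le)).continuousWithinAt

lemma g_II {γ : ℝ} (hγ : 1 < γ) (f : ℝ) (hf : 0 ≤ f) :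
    IntervalIntegrable (fun s : ℝ => Real.log (s ^ γ / (1 + s ^ γ))) volume 0 f := by
  have hγ0 : (0:ℝ) < γ := by linarith
  have hcont : ContinuousOn (fun s : ℝ => Real.log (1 + s ^ γ)) (uIcc 0 f) := by
    refine ContinuousOn.log (continuousOn_const.add ((contOn_rpow hγ0).mono (subset_univ _))) ?_
    intro s hs
    have : 0 ≤ s ^ γ := by
      rw [uIcc_of_le hf] at hs
      exact rpow_nonneg hs.1 _
    positivity
  have h2 : IntervalIntegrable (fun s : ℝ => γ * Real.log s - Real.log (1 + s ^ γ))
      volume 0 f := ((log_II f hf).const_mul γ).sub hcont.intervalIntegrable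
  rw [intervalIntegrable_iff] at h2 ⊢
  refine h2.congr_fun ?_ measurableSet_uIoc
  intro s hs
  rw [uIoc_of_le hf] at hs
  have hs0 : 0 < s := hs.1
  have hsp : 0 < s ^ γ := rpow_pos_of_pos hs0 _
  simp only
  rw [Real.log_div hsp.ne' (by positivity : (1:ℝ) + s ^ γ ≠ 0), Real.log_rpow hs0]

lemma g_contAt {γ : ℝ} (hγ : 1 < γ) {f : ℝ} (hf : 0 < f) :
    ContinuousAt (fun s : ℝ => Real.log (s ^ γ / (1 + s ^ γ))) f := by
  have h1 : ContinuousAt (fun s : ℝ => s ^ γ) f :=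
    Real.continuousAt_rpow_const f γ (Or.inl hf.ne')
  have hfp : 0 < f ^ γ := rpow_pos_of_pos hf _
  have h2 : ContinuousAt (fun s : ℝ => s ^ γ / (1 + s ^ γ)) f :=
    h1.div (continuousAt_const.add h1) (by positivity)
  exact (Real.continuousAt_log (by positivity)).comp h2

lemma Phi_deriv {γ : ℝ} (hγ : 1 < γ) (Φ : ℝ → ℝ)
    (hΦ : ∀ f : ℝ, Φ f = (1 / γ) * ∫ s in (0:ℝ)..f, Real.log (s ^ γ / (1 + s ^ γ)))
    {f : ℝ} (hf : 0 < f) :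
    HasDerivAt Φ ((1 / γ) * Real.log (f ^ γ / (1 + f ^ γ))) f := by
  have hI : HasDerivAt (fun f : ℝ => ∫ s in (0:ℝ)..f, Real.log (s ^ γ / (1 + s ^ γ)))
      (Real.log (f ^ γ / (1 + f ^ γ))) f := by
    refine intervalIntegral.integral_hasDerivAt_right (g_II hγ f hf.le) ?_ (g_contAt hγ hf)
    exact ContinuousAt.stronglyMeasurableAtFilter isOpen_Ioi
      (fun x hx => g_contAt hγ (mem_Ioi.mp hx)) f hf
  have : HasDerivAt (fun f : ℝ => (1/γ) * ∫ s in (0:ℝ)..f, Real.log (s ^ γ / (1 + s ^ γ)))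
      ((1 / γ) * Real.log (f ^ γ / (1 + f ^ γ))) f := hI.const_mul _
  exact this.congr_of_eventuallyEq (Filter.Eventually.of_forall (fun x => (hΦ x)))

lemma inv_arg_log {γ : ℝ} {s : ℝ} (hs : 0 < s) :
    Real.log ((1/s) ^ γ / (1 + (1/s) ^ γ)) = - Real.log (1 + s ^ γ) := by
  have hsp : 0 < s ^ γ := rpow_pos_of_pos hs _
  have h1 : (1/s : ℝ) ^ γ = (s ^ γ)⁻¹ := by
    rw [one_div, Real.inv_rpow hs.le]
  rw [h1]
  have h2 : (s ^ γ)⁻¹ / (1 + (s ^ γ)⁻¹) = (1 + s ^ γ)⁻¹ := by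
    field_simp
    ring
  rw [h2, Real.log_inv]

lemma Phi_deriv_inv {γ : ℝ} (hγ : 1 < γ) (Φ : ℝ → ℝ)
    (hΦ : ∀ f : ℝ, Φ f = (1 / γ) * ∫ s in (0:ℝ)..f, Real.log (s ^ γ / (1 + s ^ γ)))
    {s : ℝ} (hs : 0 < s) :
    HasDerivAt (fun t : ℝ => Φ (1/t))
      ((1/γ) * Real.log (1 + s ^ γ) / s ^ (2:ℕ)) s := by
  have hinv : HasDerivAt (fun t : ℝ => 1/t) (-(s^(2:ℕ))⁻¹) s := by
    simpa [one_div] using hasDerivAt_inv hs.ne'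
  have hd := (Phi_deriv hγ Φ hΦ (by positivity : (0:ℝ) < 1/s)).comp s hinv
  have heq : (1 / γ) * Real.log ((1/s) ^ γ / (1 + (1/s) ^ γ)) * -(s ^ (2:ℕ))⁻¹
      = (1/γ) * Real.log (1 + s ^ γ) / s ^ (2:ℕ) := by
    rw [inv_arg_log hs]; ring
  rw [heq] at hd
  exact hd

lemma log_one_add_deriv {γ : ℝ} (hγ : 1 < γ) {s : ℝ} (hs : 0 < s) :
    HasDerivAt (fun t : ℝ => Real.log (1 + t ^ γ))
      (γ * s ^ (γ - 1) / (1 + s ^ γ)) s := by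
  have hsp : 0 < s ^ γ := rpow_pos_of_pos hs _
  have h1 : HasDerivAt (fun t : ℝ => 1 + t ^ γ) (γ * s ^ (γ - 1)) s :=
    (Real.hasDerivAt_rpow_const (Or.inl hs.ne')).const_add 1
  exact h1.log (by positivity)

/-- The derivative of `Ψ` expressed via `Φ`. -/
noncomputable def Pf (γ : ℝ) (Φ : ℝ → ℝ) (s : ℝ) : ℝ :=
  Φ (1/s) + (1/γ) * ((1/s) * Real.log (1 + s ^ γ))

lemma Psi_deriv {γ : ℝ} (hγ : 1 < γ) (Φ : ℝ → ℝ)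
    (hΦ : ∀ f : ℝ, Φ f = (1 / γ) * ∫ s in (0:ℝ)..f, Real.log (s ^ γ / (1 + s ^ γ)))
    {s : ℝ} (hs : 0 < s) :
    HasDerivAt (fun t : ℝ => t * Φ (1/t)) (Pf γ Φ s) s := by
  have hinv : HasDerivAt (fun t : ℝ => 1/t) (-(s^(2:ℕ))⁻¹) s := by
    simpa [one_div] using hasDerivAt_inv hs.ne'
  have hd : HasDerivAt (fun t : ℝ => Φ (1/t))
      (1 / γ * Real.log ((1/s) ^ γ / (1 + (1/s) ^ γ)) * -(s ^ (2:ℕ))⁻¹) s :=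
    (Phi_deriv hγ Φ hΦ (by positivity : (0:ℝ) < 1/s)).comp s hinv
  have hprod : HasDerivAt (fun t : ℝ => t * Φ (1/t))
      (1 * Φ (1/s) + s * (1 / γ * Real.log ((1/s) ^ γ / (1 + (1/s) ^ γ)) * -(s ^ (2:ℕ))⁻¹)) s :=
    (hasDerivAt_id s).mul hd
  have heq : 1 * Φ (1/s) + s * ((1 / γ) * Real.log ((1/s) ^ γ / (1 + (1/s) ^ γ)) * -(s ^ (2:ℕ))⁻¹)
      = Pf γ Φ s := by
    rw [inv_arg_log hs, Pf]
    have hss : s * (s^(2:ℕ))⁻¹ = 1/s := by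
      rw [pow_two, mul_inv, ← mul_assoc, mul_inv_cancel₀ hs.ne', one_div, one_mul]
    have : s * (1 / γ * -Real.log (1 + s ^ γ) * -(s ^ (2:ℕ))⁻¹)
        = (s * (s^(2:ℕ))⁻¹) * (1 / γ * Real.log (1 + s ^ γ)) := by ring
    rw [this, hss]; ring
  rw [heq] at hprod
  exact hprod

lemma Pf_deriv {γ : ℝ} (hγ : 1 < γ) (Φ : ℝ → ℝ)
    (hΦ : ∀ f : ℝ, Φ f = (1 / γ) * ∫ s in (0:ℝ)..f, Real.log (s ^ γ / (1 + s ^ γ)))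
    {s : ℝ} (hs : 0 < s) :
    HasDerivAt (Pf γ Φ) (s ^ (γ - 2) / (1 + s ^ γ)) s := by
  have hsp : 0 < s ^ γ := rpow_pos_of_pos hs _
  have hinv : HasDerivAt (fun t : ℝ => 1/t) (-(s^(2:ℕ))⁻¹) s := by
    simpa [one_div] using hasDerivAt_inv hs.ne'
  have h2 := (hinv.mul (log_one_add_deriv hγ hs)).const_mul (1/γ)
  have h1 := Phi_deriv_inv hγ Φ hΦ hs
  have hsum := h1.add h2
  have heq : (1/γ) * Real.log (1 + s ^ γ) / s ^ (2:ℕ)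
      + (1/γ) * (-(s^(2:ℕ))⁻¹ * Real.log (1 + s ^ γ) + (1/s) * (γ * s ^ (γ - 1) / (1 + s ^ γ)))
      = s ^ (γ - 2) / (1 + s ^ γ) := by
    have hγ0 : (0:ℝ) < γ := by linarith
    have hpow : s ^ (γ - 1) / s = s ^ (γ - 2) := by
      rw [eq_comm, show γ - 2 = (γ - 1) + (-1) by ring, Real.rpow_add hs,
        Real.rpow_neg_one]
      ring
    have h1p : (0:ℝ) < 1 + s ^ γ := by positivity
    field_simp
    rw [← hpow]
    field_simp
    ring
  rw [heq] at hsum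
  exact hsum



section
variable {γ : ℝ} (hγ : 1 < γ) (Φ : ℝ → ℝ)
  (hΦ : ∀ f : ℝ, Φ f = (1 / γ) * ∫ s in (0:ℝ)..f, Real.log (s ^ γ / (1 + s ^ γ)))

include hγ hΦ

lemma Pf_mono : StrictMonoOn (Pf γ Φ) (Ioi 0) := by
  refine strictMonoOn_of_deriv_pos (convex_Ioi 0) ?_ ?_
  · exact fun s hs => ((Pf_deriv hγ Φ hΦ hs).continuousAt).continuousWithinAt
  · intro s hs
    rw [interior_Ioi] at hs
    rw [(Pf_deriv hγ Φ hΦ hs).deriv]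
    have h1 : (0:ℝ) < s ^ (γ - 2) := rpow_pos_of_pos hs _
    have h2 : (0:ℝ) < s ^ γ := rpow_pos_of_pos hs _
    positivity

lemma Psi_tangent {a b : ℝ} (ha : 0 < a) (hb : 0 < b) :
    a * Φ (1/a) + Pf γ Φ a * (b - a) ≤ b * Φ (1/b) := by
  set F : ℝ → ℝ := fun t => t * Φ (1/t) with hF
  rcases lt_trichotomy a b with hab | hab | hab
  · obtain ⟨c, hc, hceq⟩ := exists_hasDerivAt_eq_slope F (Pf γ Φ) hab
      (fun x hx => (Psi_deriv hγ Φ hΦ (lt_of_lt_of_le ha hx.1)).continuousAt.continuousWithinAt)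
      (fun x hx => Psi_deriv hγ Φ hΦ (ha.trans hx.1))
    have hmono : Pf γ Φ a ≤ Pf γ Φ c :=
      (Pf_mono hγ Φ hΦ ha (ha.trans hc.1) hc.1).le
    have hba : 0 < b - a := by linarith
    have hthis := hceq ▸ hmono
    have h2 : Pf γ Φ a * (b - a) ≤ F b - F a := (le_div_iff₀ hba).mp hthis
    have hFa : F a = a * Φ (1/a) := rfl
    have hFb : F b = b * Φ (1/b) := rfl
    linarith
  · simp [hab]
  · obtain ⟨c, hc, hceq⟩ := exists_hasDerivAt_eq_slope F (Pf γ Φ) hab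
      (fun x hx => (Psi_deriv hγ Φ hΦ (lt_of_lt_of_le hb hx.1)).continuousAt.continuousWithinAt)
      (fun x hx => Psi_deriv hγ Φ hΦ (hb.trans hx.1))
    have hmono : Pf γ Φ c ≤ Pf γ Φ a :=
      (Pf_mono hγ Φ hΦ (hb.trans hc.1) ha hc.2).le
    have hba : b - a < 0 := by linarith
    have h1 : Pf γ Φ c * (a - b) = F a - F b := by
      rw [hceq, div_mul_cancel₀ _ (sub_ne_zero.mpr (by linarith : a ≠ b))]
    have hFa : F a = a * Φ (1/a) := rfl
    have hFb : F b = b * Φ (1/b) := rfl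
    nlinarith [mul_le_mul_of_nonneg_right hmono (by linarith : (0:ℝ) ≤ a - b)]
end

lemma deriv_facts {m : ℝ} (hm : 0 < m) {u : ℝ → ℝ} (hu : ContDiffOn ℝ 2 u (Icc 0 m))
    (hu' : ∀ x ∈ Icc 0 m, 0 < deriv u x) :
    ContinuousOn (deriv u) (Icc 0 m) ∧
    (∀ x ∈ Ioo 0 m, HasDerivAt (deriv u)
      (derivWithin (derivWithin u (Icc 0 m)) (Icc 0 m) x) x) ∧
    ContinuousOn (derivWithin (derivWithin u (Icc 0 m)) (Icc 0 m)) (Icc 0 m) ∧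
    (∀ x ∈ Ioo 0 m, HasDerivAt u (deriv u x) x) := by
  have hud : UniqueDiffOn ℝ (Icc (0:ℝ) m) := uniqueDiffOn_Icc hm
  have h1 : ContDiffOn ℝ 1 (derivWithin u (Icc 0 m)) (Icc 0 m) :=
    hu.derivWithin hud (by norm_num)
  have hcw : ContinuousOn (derivWithin u (Icc 0 m)) (Icc 0 m) := h1.continuousOn
  have hdiffW : DifferentiableOn ℝ (derivWithin u (Icc 0 m)) (Icc 0 m) :=
    h1.differentiableOn one_ne_zero
  have hcc : ContinuousOn (derivWithin (derivWithin u (Icc 0 m)) (Icc 0 m)) (Icc 0 m) :=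
    (h1.derivWithin (m := 0) hud (by norm_num)).continuousOn
  -- differentiability of u at each point of Icc
  have hdAt : ∀ x ∈ Icc (0:ℝ) m, DifferentiableAt ℝ u x := by
    intro x hx
    rcases eq_or_ne (deriv u x) 0 with h0 | h0
    · exact absurd h0 (ne_of_gt (hu' x hx))
    · by_contra hnd
      exact h0 (deriv_zero_of_not_differentiableAt hnd)
  have heqd : ∀ x ∈ Icc (0:ℝ) m, derivWithin u (Icc 0 m) x = deriv u x := by
    intro x hx
    exact (hdAt x hx).derivWithin (hud x hx)
  refine ⟨hcw.congr (fun x hx => (heqd x hx).symm), ?_, hcc, ?_⟩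
  · intro x hx
    have hxI : Icc (0:ℝ) m ∈ nhds x := Icc_mem_nhds hx.1 hx.2
    have h2 : HasDerivAt (derivWithin u (Icc 0 m))
        (derivWithin (derivWithin u (Icc 0 m)) (Icc 0 m) x) x :=
      ((hdiffW x (Ioo_subset_Icc_self hx)).hasDerivWithinAt).hasDerivAt hxI
    refine h2.congr_of_eventuallyEq ?_
    exact Filter.eventuallyEq_of_mem hxI (fun y hy => (heqd y hy).symm)
  · intro x hx
    exact (hdAt x (Ioo_subset_Icc_self hx)).hasDerivAt



theorem stmt_10 (γ m R₁ τ : ℝ) (hγ : 1 < γ) (hm : 0 < m) (hR₁ : 0 < R₁) (hτ : 0 < τ)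
    (Φ Ψ : ℝ → ℝ)
    (hΦ : ∀ f : ℝ, Φ f = (1 / γ) * ∫ s in (0:ℝ)..f, Real.log (s ^ γ / (1 + s ^ γ)))
    (hΨ : ∀ s : ℝ, 0 < s → Ψ s = s * Φ (1 / s))
    (H : (ℝ → ℝ) → ℝ)
    (hH : ∀ w : ℝ → ℝ, H w = ∫ x in (0:ℝ)..m, ((w x) ^ 2 / 2 + Ψ (deriv w x)))
    (u un : ℝ → ℝ)
    (hu : ContDiffOn ℝ 2 u (Set.Icc 0 m)) (hun : ContDiffOn ℝ 2 un (Set.Icc 0 m))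
    (hu' : ∀ x ∈ Set.Icc 0 m, 0 < deriv u x)
    (hun' : ∀ x ∈ Set.Icc 0 m, 0 < deriv un x)
    (hbc0 : u 0 = -R₁) (hbcn0 : un 0 = -R₁) (hbcm : u m = R₁) (hbcnm : un m = R₁)
    (heq : ∀ x ∈ Set.Ioo 0 m,
      (deriv u x) ^ γ * (u x - un x) / τ
        - (1 / (γ - 1)) * deriv (fun y => (deriv u y) ^ (γ - 1)) x
        + u x * ((deriv u x) ^ γ + 1) = 0) :
    H u ≤ H un := by
  obtain ⟨cont_a, hA, cont_cu, hU⟩ := deriv_facts hm hu hu'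
  obtain ⟨cont_b, -, -, hUn⟩ := deriv_facts hm hun hun'
  set cu : ℝ → ℝ := derivWithin (derivWithin u (Icc 0 m)) (Icc 0 m) with hcu
  set F : ℝ → ℝ := fun x => Pf γ Φ (deriv u x) with hFdef
  set D : ℝ → ℝ :=
    fun x => (deriv u x) ^ (γ - 2) / (1 + (deriv u x) ^ γ) * cu x with hDdef
  set G : ℝ → ℝ := fun x => un x - u x with hGdef
  set K : ℝ → ℝ := fun x => (deriv u x) ^ γ / (1 + (deriv u x) ^ γ) with hKdef
  have cont_u : ContinuousOn u (Icc 0 m) := hu.continuousOn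
  have cont_un : ContinuousOn un (Icc 0 m) := hun.continuousOn
  have cont_G : ContinuousOn G (Icc 0 m) := cont_un.sub cont_u
  -- continuity of Pf on positives, of Φ on positives
  have contPf : ContinuousOn (Pf γ Φ) (Ioi 0) :=
    fun s hs => ((Pf_deriv hγ Φ hΦ (mem_Ioi.mp hs)).continuousAt).continuousWithinAt
  have contPhi : ContinuousOn Φ (Ioi 0) :=
    fun s hs => ((Phi_deriv hγ Φ hΦ (mem_Ioi.mp hs)).continuousAt).continuousWithinAt
  have maps_a : MapsTo (deriv u) (Icc 0 m) (Ioi 0) := fun x hx => mem_Ioi.mpr (hu' x hx)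
  have cont_F : ContinuousOn F (Icc 0 m) := contPf.comp cont_a maps_a
  have cont_D : ContinuousOn D (Icc 0 m) := by
    refine ContinuousOn.mul (ContinuousOn.div ?_ ?_ ?_) cont_cu
    · exact cont_a.rpow_const (fun x hx => Or.inl (hu' x hx).ne')
    · exact continuousOn_const.add (cont_a.rpow_const (fun x hx => Or.inl (hu' x hx).ne'))
    · intro x hx
      have : (0:ℝ) < (deriv u x) ^ γ := rpow_pos_of_pos (hu' x hx) _
      positivity
  have cont_K : ContinuousOn K (Icc 0 m) := by
    refine ContinuousOn.div ?_ ?_ ?_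
    · exact cont_a.rpow_const (fun x hx => Or.inl (hu' x hx).ne')
    · exact continuousOn_const.add (cont_a.rpow_const (fun x hx => Or.inl (hu' x hx).ne'))
    · intro x hx
      have : (0:ℝ) < (deriv u x) ^ γ := rpow_pos_of_pos (hu' x hx) _
      positivity
  -- continuity of Ψ ∘ deriv
  have contPsi : ∀ (w : ℝ → ℝ), ContinuousOn (deriv w) (Icc 0 m) →
      (∀ x ∈ Icc 0 m, 0 < deriv w x) →
      ContinuousOn (fun x => Ψ (deriv w x)) (Icc 0 m) := by
    intro w hcw hw'
    have h1 : ContinuousOn (fun x => (deriv w x) * Φ (1 / deriv w x)) (Icc 0 m) := by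
      refine hcw.mul (contPhi.comp (continuousOn_const.div hcw (fun x hx => (hw' x hx).ne')) ?_)
      intro x hx
      exact mem_Ioi.mpr (one_div_pos.mpr (hw' x hx))
    exact h1.congr (fun x hx => hΨ (deriv w x) (hw' x hx))
  have cont_Psa := contPsi u cont_a hu'
  have cont_Psb := contPsi un cont_b hun'
  -- derivative of F on the interior
  have hFd : ∀ x ∈ Ioo 0 m, HasDerivAt F (D x) x := by
    intro x hx
    have := (Pf_deriv hγ Φ hΦ (hu' x (Ioo_subset_Icc_self hx))).comp x (hA x hx)
    exact this
  -- derivative of G on the interior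
  have hGd : ∀ x ∈ Ioo 0 m, HasDerivAt G (deriv un x - deriv u x) x :=
    fun x hx => (hUn x hx).sub (hU x hx)
  -- IBP
  set S : ℝ → ℝ := fun x => D x * G x + F x * (deriv un x - deriv u x) with hSdef
  have cont_S : ContinuousOn S (Icc 0 m) :=
    (cont_D.mul cont_G).add (cont_F.mul (cont_b.sub cont_a))
  have hS_int : IntervalIntegrable S volume 0 m := by
    rw [intervalIntegrable_iff_integrableOn_Icc_of_le hm.le]
    exact cont_S.integrableOn_compact isCompact_Icc
  have hIBP : ∫ x in (0:ℝ)..m, S x = 0 := by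
    have := intervalIntegral.integral_eq_sub_of_hasDerivAt_of_le hm.le
      (cont_F.mul cont_G)
      (fun x hx => (hFd x hx).mul (hGd x hx)) hS_int
    rw [this]
    have hG0 : G 0 = 0 := by simp [hGdef, hbc0, hbcn0]
    have hGm : G m = 0 := by simp [hGdef, hbcm, hbcnm]
    rw [Pi.mul_apply, Pi.mul_apply, hG0, hGm]; ring
  -- rewriting the Euler equation
  have heq2 : ∀ x ∈ Ioo 0 m, u x - D x = K x * G x / τ := by
    intro x hx
    have hxI := Ioo_subset_Icc_self hx
    set s := deriv u x with hs
    have hs0 : 0 < s := hu' x hxI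
    have hpow : deriv (fun y => (deriv u y) ^ (γ - 1)) x = (γ - 1) * s ^ (γ - 2) * cu x := by
      have h1 : HasDerivAt (fun y => (deriv u y) ^ (γ - 1))
          ((γ - 1) * s ^ (γ - 1 - 1) * cu x) x :=
        by have h := (Real.hasDerivAt_rpow_const (x := s) (p := γ - 1) (Or.inl hs0.ne')).comp x (hA x hx); exact h
      rw [h1.deriv, show γ - 1 - 1 = γ - 2 by ring]
    have hE := heq x hx
    rw [hpow] at hE
    have hsγ : (0:ℝ) < s ^ γ := rpow_pos_of_pos hs0 _
    have h1p : (0:ℝ) < 1 + s ^ γ := by positivity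
    have hγ1 : γ - 1 ≠ 0 := by intro h; apply absurd h; intro h'; linarith
    show u x - s ^ (γ - 2) / (1 + s ^ γ) * cu x = s ^ γ / (1 + s ^ γ) * (un x - u x) / τ
    field_simp at hE ⊢
    nlinarith [hE, hsγ, h1p]
  -- pointwise inequality
  set R : ℝ → ℝ := fun x => u x * G x + F x * (deriv un x - deriv u x) with hRdef
  have cont_R : ContinuousOn R (Icc 0 m) :=
    (cont_u.mul cont_G).add (cont_F.mul (cont_b.sub cont_a))
  have hpt : ∀ x ∈ Icc 0 m, (u x) ^ 2 / 2 + Ψ (deriv u x) + R x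
      ≤ (un x) ^ 2 / 2 + Ψ (deriv un x) := by
    intro x hx
    have ha := hu' x hx
    have hb := hun' x hx
    have htan := Psi_tangent hγ Φ hΦ ha hb
    rw [← hΨ _ ha, ← hΨ _ hb] at htan
    have hsq : (u x) ^ 2 / 2 + u x * G x ≤ (un x) ^ 2 / 2 := by
      have : 0 ≤ (un x - u x)^2 := sq_nonneg _
      simp only [hGdef]; nlinarith
    simp only [hRdef]
    have : Ψ (deriv u x) + F x * (deriv un x - deriv u x) ≤ Ψ (deriv un x) := by
      simpa [hFdef] using htan
    linarith
  -- integrabilities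
  have hAint : IntervalIntegrable (fun x => (u x) ^ 2 / 2 + Ψ (deriv u x)) volume 0 m := by
    rw [intervalIntegrable_iff_integrableOn_Icc_of_le hm.le]
    exact (((cont_u.pow 2).div_const 2).add cont_Psa).integrableOn_compact isCompact_Icc
  have hBint : IntervalIntegrable (fun x => (un x) ^ 2 / 2 + Ψ (deriv un x)) volume 0 m := by
    rw [intervalIntegrable_iff_integrableOn_Icc_of_le hm.le]
    exact (((cont_un.pow 2).div_const 2).add cont_Psb).integrableOn_compact isCompact_Icc
  have hRint : IntervalIntegrable R volume 0 m := by
    rw [intervalIntegrable_iff_integrableOn_Icc_of_le hm.le]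
    exact cont_R.integrableOn_compact isCompact_Icc
  -- ∫ R ≥ 0
  have hRS : ∫ x in (0:ℝ)..m, (R x - S x) = ∫ x in (0:ℝ)..m, (u x - D x) * G x := by
    apply intervalIntegral.integral_congr
    intro x _
    simp only [hRdef, hSdef]; ring
  have hKG : ∫ x in (0:ℝ)..m, (u x - D x) * G x
      = ∫ x in (0:ℝ)..m, K x * G x / τ * G x := by
    apply intervalIntegral.integral_congr_ae
    have hae : ∀ᵐ x : ℝ ∂volume, x ≠ m := by
      refine ae_iff.mpr ?_
      simp only [not_not, setOf_eq_eq_singleton]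
      exact Real.volume_singleton
    filter_upwards [hae] with x hxm hxmem
    rw [uIoc_of_le hm.le] at hxmem
    have hxIoo : x ∈ Ioo 0 m := ⟨hxmem.1, lt_of_le_of_ne hxmem.2 hxm⟩
    rw [heq2 x hxIoo]
  have hKG_nonneg : 0 ≤ ∫ x in (0:ℝ)..m, K x * G x / τ * G x := by
    apply intervalIntegral.integral_nonneg hm.le
    intro x hx
    have hK0 : 0 ≤ K x := by
      have h1 : (0:ℝ) < (deriv u x) ^ γ := rpow_pos_of_pos (hu' x hx) _
      simp only [hKdef]; positivity
    have : K x * G x / τ * G x = K x * (G x)^2 / τ := by ring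
    rw [this]
    positivity
  have hRnonneg : 0 ≤ ∫ x in (0:ℝ)..m, R x := by
    have h1 : ∫ x in (0:ℝ)..m, (R x - S x) = (∫ x in (0:ℝ)..m, R x) - ∫ x in (0:ℝ)..m, S x :=
      intervalIntegral.integral_sub hRint hS_int
    have := hRS
    rw [h1, hIBP, sub_zero] at this
    rw [this, hKG]
    exact hKG_nonneg
  -- final combination
  rw [hH u, hH un]
  have hmono : ∫ x in (0:ℝ)..m, ((u x) ^ 2 / 2 + Ψ (deriv u x) + R x)
      ≤ ∫ x in (0:ℝ)..m, ((un x) ^ 2 / 2 + Ψ (deriv un x)) :=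
    intervalIntegral.integral_mono_on hm.le (hAint.add hRint) hBint hpt
  have hsplit : ∫ x in (0:ℝ)..m, ((u x) ^ 2 / 2 + Ψ (deriv u x) + R x)
      = (∫ x in (0:ℝ)..m, ((u x) ^ 2 / 2 + Ψ (deriv u x))) + ∫ x in (0:ℝ)..m, R x :=
    intervalIntegral.integral_add hAint hRint
  linarith [hmono, hsplit, hRnonneg]
end

section
/- If f : ℝ² → ℝ, f ≥ 0, is an isotropic classical solution of the 2D Kaniadakis–Quarati equation ∂_t f = Δf + div(v f(1+f)) with sufficient decay, and h is defined by h(t,v) = f(t,v) exp(M̄_f(t,|v|)) where M̄_f(t,ρ) = (1/2π) ∫_{|w|≤ρ} f(t,w) dw, then h solves the linear Fokker–Planck equation ∂_t h = Δh + div(v h). -/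
set_option maxHeartbeats 1000000

open MeasureTheory Real Set Finset
open scoped ContDiff

lemma polar_disk {u : EuclideanSpace ℝ (Fin 2) → ℝ} {G : ℝ → ℝ} (hu : ∀ w, u w = G ‖w‖)
    {ρ : ℝ} (hρ : 0 ≤ ρ) :
    ∫ w in Metric.closedBall (0 : EuclideanSpace ℝ (Fin 2)) ρ, u w
      = (2 * π) * ∫ r in (0:ℝ)..ρ, r * G r := by
  have h1 : ∫ w in Metric.closedBall (0:EuclideanSpace ℝ (Fin 2)) ρ, u w
      = ∫ w : EuclideanSpace ℝ (Fin 2), (Set.indicator (Iic ρ) G) ‖w‖ := by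
    rw [← MeasureTheory.integral_indicator measurableSet_closedBall]
    congr 1; ext w
    by_cases hw : ‖w‖ ≤ ρ
    · rw [Set.indicator_of_mem (by simpa [dist_zero_right] using hw),
        Set.indicator_of_mem (by simpa using hw), hu]
    · rw [Set.indicator_of_notMem (by simpa [dist_zero_right] using hw),
        Set.indicator_of_notMem (by simpa using hw)]
  rw [h1, MeasureTheory.integral_fun_norm_addHaar volume (Set.indicator (Iic ρ) G)]
  have hdim : Module.finrank ℝ (EuclideanSpace ℝ (Fin 2)) = 2 := finrank_euclideanSpace_fin
  rw [hdim]
  have hvol : (volume (Metric.ball (0 : EuclideanSpace ℝ (Fin 2)) 1)).toReal = π := by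
    rw [EuclideanSpace.volume_ball]
    norm_num [Fintype.card_fin, Real.Gamma_two, Real.sq_sqrt pi_nonneg]
    exact pi_nonneg
  rw [measureReal_def, hvol]
  have h2 : ∫ y in Ioi (0:ℝ), y ^ (2-1) • (Set.indicator (Iic ρ) G) y
      = ∫ r in (0:ℝ)..ρ, r * G r := by
    simp only [show (2-1:ℕ)=1 from rfl, pow_one, smul_eq_mul]
    rw [show (fun y => y * (Set.indicator (Iic ρ) G) y) = (Set.indicator (Iic ρ) (fun r => r * G r)) by
      ext y; by_cases hy : y ∈ Iic ρ
      · rw [Set.indicator_of_mem hy, Set.indicator_of_mem hy]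
      · rw [Set.indicator_of_notMem hy, Set.indicator_of_notMem hy, mul_zero]]
    rw [MeasureTheory.setIntegral_indicator measurableSet_Iic,
      intervalIntegral.integral_of_le hρ]
    congr 1
  rw [h2, nsmul_eq_mul, smul_eq_mul]
  ring

lemma norm_hasFDerivAt {w : EuclideanSpace ℝ (Fin 2)} (hw : w ≠ 0) :
    HasFDerivAt (fun x : EuclideanSpace ℝ (Fin 2) => ‖x‖) (‖w‖⁻¹ • innerSL ℝ w) w := by
  have hn : ‖w‖ ≠ 0 := norm_ne_zero_iff.mpr hw
  have h1 : HasFDerivAt (fun x : EuclideanSpace ℝ (Fin 2) => ‖x‖^2) (2 • innerSL ℝ w) w :=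
    (hasStrictFDerivAt_norm_sq w).hasFDerivAt
  have h2 : HasDerivAt Real.sqrt (1/(2*Real.sqrt (‖w‖^2))) (‖w‖^2) :=
    Real.hasDerivAt_sqrt (by positivity)
  have h3 := h2.comp_hasFDerivAt w h1
  have h4 : (fun x : EuclideanSpace ℝ (Fin 2) => Real.sqrt (‖x‖^2)) = fun x => ‖x‖ := by
    funext x; exact Real.sqrt_sq (norm_nonneg x)
  rw [show (Real.sqrt ∘ fun x : EuclideanSpace ℝ (Fin 2) => ‖x‖^2) = fun x => ‖x‖ from h4] at h3
  refine h3.congr_fderiv (Eq.symm ?_)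
  rw [Real.sqrt_sq (norm_nonneg w), smul_comm]
  ext u
  simp [smul_smul]
  ring_nf

theorem stmt_13
    (f : ℝ → EuclideanSpace ℝ (Fin 2) → ℝ)
    (hsmooth : ContDiff ℝ (⊤ : ℕ∞) (fun p : ℝ × EuclideanSpace ℝ (Fin 2) => f p.1 p.2))
    (hnonneg : ∀ t v, 0 ≤ f t v)
    (hiso : ∃ g : ℝ → ℝ → ℝ, ∀ t v, f t v = g t ‖v‖)
    (hdecay : ∀ t : ℝ, Integrable (f t))
    (hpde : ∀ t > (0:ℝ), ∀ v : EuclideanSpace ℝ (Fin 2),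
      deriv (fun s => f s v) t =
        (∑ i : Fin 2, fderiv ℝ (fun w => fderiv ℝ (f t) w (EuclideanSpace.single i (1:ℝ))) v
            (EuclideanSpace.single i (1:ℝ))) +
        (∑ i : Fin 2, fderiv ℝ (fun w : EuclideanSpace ℝ (Fin 2) =>
            w i * f t w * (1 + f t w)) v (EuclideanSpace.single i (1:ℝ))))
    (Mbar : ℝ → ℝ → ℝ)
    (hMbar : ∀ t ρ, Mbar t ρ = (1 / (2 * π)) * ∫ w in Metric.closedBall (0 : EuclideanSpace ℝ (Fin 2)) ρ, f t w)
    (h : ℝ → EuclideanSpace ℝ (Fin 2) → ℝ)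
    (hdef : ∀ t v, h t v = f t v * Real.exp (Mbar t ‖v‖)) :
    ∀ t > (0:ℝ), ∀ v : EuclideanSpace ℝ (Fin 2),
      deriv (fun s => h s v) t =
        (∑ i : Fin 2, fderiv ℝ (fun w => fderiv ℝ (h t) w (EuclideanSpace.single i (1:ℝ))) v
            (EuclideanSpace.single i (1:ℝ))) +
        (∑ i : Fin 2, fderiv ℝ (fun w : EuclideanSpace ℝ (Fin 2) =>
            w i * h t w) v (EuclideanSpace.single i (1:ℝ))) := by
  obtain ⟨g₀, hg₀⟩ := hiso
  intro t ht v
  have hsm : ContDiff ℝ ∞ (fun p : ℝ × EuclideanSpace ℝ (Fin 2) => f p.1 p.2) :=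
    hsmooth.of_le (by simp)
  set e : Fin 2 → EuclideanSpace ℝ (Fin 2) := fun i => EuclideanSpace.single i (1:ℝ) with he
  set g : ℝ → ℝ → ℝ := fun s r => f s (r • e 0) with hgdef
  -- basic smoothness
  have hfs : ∀ s, ContDiff ℝ ∞ (f s) := by
    intro s
    exact hsm.comp ((contDiff_const).prodMk contDiff_id)
  have hG : ContDiff ℝ ∞ (fun q : ℝ × ℝ => g q.1 q.2) := by
    exact hsm.comp (contDiff_fst.prodMk (contDiff_snd.smul contDiff_const))
  have hgt : ContDiff ℝ ∞ (g t) :=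
    hG.comp ((contDiff_const).prodMk contDiff_id)
  -- radial representation
  have hrad : ∀ s w, f s w = g s ‖w‖ := by
    intro s w
    have h1 : ‖(‖w‖ • e 0 : EuclideanSpace ℝ (Fin 2))‖ = ‖w‖ := by
      rw [norm_smul]
      simp [he, EuclideanSpace.norm_single]
    rw [hg₀ s w, hgdef]
    simp only
    rw [hg₀ s (‖w‖ • e 0), h1]
  -- time-derivative of g
  set p : ℝ → ℝ → ℝ := fun x r => fderiv ℝ (fun q : ℝ × ℝ => g q.1 q.2) (x, r) ((1:ℝ), (0:ℝ)) with hpdef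
  have hp : ∀ x r, HasDerivAt (fun s => g s r) (p x r) x := by
    intro x r
    have hdG : HasFDerivAt (fun q : ℝ × ℝ => g q.1 q.2)
        (fderiv ℝ (fun q : ℝ × ℝ => g q.1 q.2) (x, r)) (x, r) :=
      ((hG.differentiable (by norm_num)) (x, r)).hasFDerivAt
    have hline : HasDerivAt (fun s : ℝ => ((s, r) : ℝ × ℝ)) ((1:ℝ), (0:ℝ)) x :=
      (hasDerivAt_id x).prodMk (hasDerivAt_const x r)
    exact hdG.comp_hasDerivAt x hline
  have hpc : Continuous (fun q : ℝ × ℝ => p q.1 q.2) := by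
    have h1 : Continuous (fderiv ℝ (fun q : ℝ × ℝ => g q.1 q.2)) :=
      hG.continuous_fderiv (by norm_num)
    have h2 : Continuous (fun q : ℝ × ℝ => fderiv ℝ (fun q : ℝ × ℝ => g q.1 q.2) q ((1:ℝ),(0:ℝ))) :=
      h1.clm_apply continuous_const
    simpa using h2
  set d1 : ℝ → ℝ := deriv (g t) with hd1def
  set d2 : ℝ → ℝ := deriv d1 with hd2def
  have hd1 : ∀ r, HasDerivAt (g t) (d1 r) r := fun r =>
    ((hgt.differentiable (by norm_num)) r).hasDerivAt
  have hd1smooth : ContDiff ℝ ∞ d1 := (contDiff_infty_iff_deriv.mp hgt).2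
  have hd2 : ∀ r, HasDerivAt d1 (d2 r) r := fun r =>
    ((hd1smooth.differentiable (by norm_num)) r).hasDerivAt
  -- Mbar reduction
  have hM1 : ∀ s ρ, 0 ≤ ρ → Mbar s ρ = ∫ r in (0:ℝ)..ρ, r * g s r := by
    intro s ρ hρ
    rw [hMbar, polar_disk (hrad s) hρ]
    have : (2:ℝ) * π ≠ 0 := by positivity
    field_simp
  -- gradient of the radial cumulative mass
  have hMd : ∀ w, HasFDerivAt (fun x : EuclideanSpace ℝ (Fin 2) => Mbar t ‖x‖)
      ((f t w) • innerSL ℝ w) w := by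
    intro w
    have hMG : (fun x : EuclideanSpace ℝ (Fin 2) => Mbar t ‖x‖)
        = fun x => ∫ r in (0:ℝ)..‖x‖, r * g t r :=
      funext fun x => hM1 t ‖x‖ (norm_nonneg x)
    have hcont : Continuous (fun r : ℝ => r * g t r) :=
      continuous_id.mul (hgt.continuous)
    have hGt : ∀ ρ : ℝ, HasDerivAt (fun σ : ℝ => ∫ r in (0:ℝ)..σ, r * g t r) (ρ * g t ρ) ρ := by
      intro ρ
      exact intervalIntegral.integral_hasDerivAt_right
        (hcont.intervalIntegrable _ _)
        (hcont.stronglyMeasurableAtFilter _ _)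
        hcont.continuousAt
    rw [hMG]
    rcases eq_or_ne w 0 with hw | hw
    · subst hw
      have hval : f t (0 : EuclideanSpace ℝ (Fin 2)) • innerSL ℝ (0 : EuclideanSpace ℝ (Fin 2))
          = (0 : EuclideanSpace ℝ (Fin 2) →L[ℝ] ℝ) := by
        simp
      rw [hval]
      rw [hasFDerivAt_iff_isLittleO_nhds_zero]
      have h0 : HasDerivAt (fun σ : ℝ => ∫ r in (0:ℝ)..σ, r * g t r) 0 0 := by
        simpa using hGt 0
      have h1 : (fun ρ : ℝ => (∫ r in (0:ℝ)..ρ, r * g t r) - ∫ r in (0:ℝ)..(0:ℝ), r * g t r)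
          =o[nhds 0] (fun ρ : ℝ => ρ) := by
        have := (hasDerivAt_iff_isLittleO (f := fun σ : ℝ => ∫ r in (0:ℝ)..σ, r * g t r)
          (f' := 0) (x := 0)).mp h0
        simpa using this
      have h2 : Filter.Tendsto (fun x : EuclideanSpace ℝ (Fin 2) => ‖x‖) (nhds 0) (nhds 0) := by
        simpa using (continuous_norm.tendsto (0 : EuclideanSpace ℝ (Fin 2)))
      have h3 := h1.comp_tendsto h2
      have h4 : (fun x : EuclideanSpace ℝ (Fin 2) => ‖x‖) =O[nhds 0] (fun x => x) :=
        Asymptotics.isBigO_of_le _ (fun x => by simp)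
      have h5 := h3.trans_isBigO h4
      simpa [Function.comp_def] using h5
    · have hnorm := norm_hasFDerivAt hw
      have hcomp := (hGt ‖w‖).comp_hasFDerivAt w hnorm
      have hne : ‖w‖ ≠ 0 := norm_ne_zero_iff.mpr hw
      refine hcomp.congr_fderiv (Eq.symm ?_)
      rw [smul_smul, hrad t w]
      congr 1
      field_simp
  -- pointwise gradient of f away from 0
  have hfderiv : ∀ x : EuclideanSpace ℝ (Fin 2), x ≠ 0 →
      fderiv ℝ (f t) x = d1 ‖x‖ • (‖x‖⁻¹ • innerSL ℝ x) := by
    intro x hx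
    have hfx : f t = fun y => g t ‖y‖ := funext (hrad t)
    have hh : HasFDerivAt (f t) (d1 ‖x‖ • (‖x‖⁻¹ • innerSL ℝ x)) x := by
      rw [hfx]
      exact (hd1 ‖x‖).comp_hasFDerivAt x (norm_hasFDerivAt hx)
    exact hh.fderiv
  -- the radial flux function
  set P : ℝ → ℝ := fun r => r * d1 r + r^2 * (g t r * (1 + g t r)) with hPdef
  have hdiff_fderiv : ∀ i : Fin 2, Differentiable ℝ (fun x => fderiv ℝ (f t) x (e i)) := by
    intro i
    have h1 : ContDiff ℝ ∞ (fun x => fderiv ℝ (f t) x) :=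
      (hfs t).fderiv_right (le_refl _)
    exact (h1.clm_apply contDiff_const).differentiable (by norm_num)
  have hproj : ∀ (i : Fin 2) (x : EuclideanSpace ℝ (Fin 2)),
      HasFDerivAt (fun y : EuclideanSpace ℝ (Fin 2) => (y i : ℝ))
        (EuclideanSpace.proj (𝕜 := ℝ) i) x :=
    fun i x => (EuclideanSpace.proj (𝕜 := ℝ) i).hasFDerivAt
  have hlapformula : ∀ (x : EuclideanSpace ℝ (Fin 2)), x ≠ 0 → ∀ i : Fin 2,
      fderiv ℝ (fun y => fderiv ℝ (f t) y (e i)) x (e i)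
        = (d2 ‖x‖ * (‖x‖⁻¹ * x i)) * (‖x‖⁻¹ * x i)
          + d1 ‖x‖ * ((-(‖x‖^2)⁻¹ * (‖x‖⁻¹ * x i)) * x i + ‖x‖⁻¹ * 1) := by
    intro x hx i
    have hne : ‖x‖ ≠ 0 := norm_ne_zero_iff.mpr hx
    have hnormd := norm_hasFDerivAt hx
    have hA : HasFDerivAt (fun y : EuclideanSpace ℝ (Fin 2) => d1 ‖y‖)
        (d2 ‖x‖ • (‖x‖⁻¹ • innerSL ℝ x)) x :=
      (hd2 ‖x‖).comp_hasFDerivAt x hnormd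
    have hB : HasFDerivAt (fun y : EuclideanSpace ℝ (Fin 2) => ‖y‖⁻¹)
        ((-(‖x‖^2)⁻¹) • (‖x‖⁻¹ • innerSL ℝ x)) x :=
      (hasDerivAt_inv hne).comp_hasFDerivAt x hnormd
    have hBC := hB.mul (hproj i x)
    have htot := hA.mul hBC
    have heq : (fun y : EuclideanSpace ℝ (Fin 2) => fderiv ℝ (f t) y (e i))
        =ᶠ[nhds x] (fun y => d1 ‖y‖ * (‖y‖⁻¹ * y i)) := by
      refine Filter.eventually_of_mem (IsOpen.mem_nhds isOpen_compl_singleton hx) ?_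
      intro y hy
      show fderiv ℝ (f t) y (e i) = d1 ‖y‖ * (‖y‖⁻¹ * y i)
      rw [hfderiv y hy]
      simp only [ContinuousLinearMap.smul_apply, smul_eq_mul, innerSL_apply_apply, he]
      rw [show (inner ℝ y (EuclideanSpace.single i (1:ℝ)) : ℝ) = y i by
        rw [EuclideanSpace.inner_single_right]; simp]
    rw [heq.fderiv_eq, HasFDerivAt.fderiv (f := (fun y : EuclideanSpace ℝ (Fin 2) => d1 ‖y‖ * (‖y‖⁻¹ * y i))) htot]
    simp only [Pi.mul_apply, ContinuousLinearMap.add_apply, ContinuousLinearMap.smul_apply,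
      smul_eq_mul, innerSL_apply_apply]
    rw [he]
    simp only [EuclideanSpace.inner_single_right, map_one, one_mul, starRingEnd_apply,
      star_trivial]
    have hproj_ap : (EuclideanSpace.proj i) (EuclideanSpace.single i (1:ℝ)) = 1 := by
      simp
    rw [hproj_ap]
    ring
  have hdivformula : ∀ (x : EuclideanSpace ℝ (Fin 2)), x ≠ 0 → ∀ i : Fin 2,
      fderiv ℝ (fun y : EuclideanSpace ℝ (Fin 2) => y i * f t y * (1 + f t y)) x (e i)
        = (1 * f t x + x i * (d1 ‖x‖ * (‖x‖⁻¹ * x i))) * (1 + f t x)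
          + (x i * f t x) * (d1 ‖x‖ * (‖x‖⁻¹ * x i)) := by
    intro x hx i
    have hfw : HasFDerivAt (f t) (d1 ‖x‖ • (‖x‖⁻¹ • innerSL ℝ x)) x := by
      have := ((hfs t).differentiable (by norm_num) x).hasFDerivAt
      rwa [hfderiv x hx] at this
    have h1 := ((hproj i x).mul hfw).mul (hfw.const_add 1)
    rw [HasFDerivAt.fderiv (f := (fun y : EuclideanSpace ℝ (Fin 2) => y i * f t y * (1 + f t y))) h1]
    simp only [Pi.mul_apply, ContinuousLinearMap.add_apply, ContinuousLinearMap.smul_apply,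
      smul_eq_mul, innerSL_apply_apply]
    rw [he]
    simp only [EuclideanSpace.inner_single_right, map_one, one_mul, starRingEnd_apply,
      star_trivial]
    have hproj_ap : (EuclideanSpace.proj i) (EuclideanSpace.single i (1:ℝ)) = 1 := by
      simp
    rw [hproj_ap]
    ring
  have hPd : ∀ r, 0 < r → HasDerivAt P (r * p t r) r := by
    intro r hr
    have hrne : r ≠ 0 := hr.ne'
    set w : EuclideanSpace ℝ (Fin 2) := r • e 0 with hwdef
    have he0 : ‖e 0‖ = 1 := by simp [he]
    have hwnorm : ‖w‖ = r := by
      rw [hwdef, norm_smul, he0, mul_one, Real.norm_eq_abs, abs_of_pos hr]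
    have hw0 : w ≠ 0 := by
      intro h0
      rw [h0, norm_zero] at hwnorm
      exact hrne hwnorm.symm
    have hw0c : w 0 = r := by
      simp [hwdef, he, EuclideanSpace.single_apply]
    have hw1c : w 1 = 0 := by
      simp [hwdef, he, EuclideanSpace.single_apply]
    have hpde_w := hpde t ht w
    have hderivt : deriv (fun s => f s w) t = p t r := by
      have : (fun s => f s w) = fun s => g s r := by
        funext s; rw [hwdef]
      rw [this]
      exact (hp t r).deriv
    rw [hderivt] at hpde_w
    have hlapsum : ∑ i : Fin 2, fderiv ℝ (fun y => fderiv ℝ (f t) y (EuclideanSpace.single i (1:ℝ))) w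
        (EuclideanSpace.single i (1:ℝ)) = d2 r + d1 r * r⁻¹ := by
      rw [Fin.sum_univ_two]
      have h0 := hlapformula w hw0 0
      have h1 := hlapformula w hw0 1
      rw [he] at h0 h1
      rw [h0, h1, hwnorm, hw0c, hw1c]
      field_simp
      ring
    have hdivsum : ∑ i : Fin 2, fderiv ℝ (fun y : EuclideanSpace ℝ (Fin 2) =>
        y i * f t y * (1 + f t y)) w (EuclideanSpace.single i (1:ℝ))
        = 2 * (g t r * (1 + g t r)) + r * d1 r * (1 + 2 * g t r) := by
      rw [Fin.sum_univ_two]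
      have h0 := hdivformula w hw0 0
      have h1 := hdivformula w hw0 1
      rw [he] at h0 h1
      rw [h0, h1, hwnorm, hw0c, hw1c]
      rw [show f t w = g t r by rw [hrad t w, hwnorm]]
      field_simp
      ring
    rw [hlapsum, hdivsum] at hpde_w
    -- now build the derivative of P
    have hPder : HasDerivAt P
        (1 * d1 r + r * d2 r
          + ((2:ℕ) * r ^ 1 * (g t r * (1 + g t r)) + r^2 * (d1 r * (1 + g t r) + g t r * d1 r))) r := by
      rw [hPdef]
      exact ((hasDerivAt_id r).mul (hd2 r)).add
        ((hasDerivAt_pow 2 r).mul ((hd1 r).mul ((hd1 r).const_add 1)))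
    convert hPder using 1
    rw [hpde_w]
    push_cast
    field_simp
    ring
  -- time derivative of Mbar at radius ‖v‖
  have hMt : HasDerivAt (fun s => Mbar s ‖v‖) (P ‖v‖) t := by
    have hρ : (0:ℝ) ≤ ‖v‖ := norm_nonneg v
    have hfun : (fun s => Mbar s ‖v‖) = fun s => ∫ r in (0:ℝ)..‖v‖, r * g s r :=
      funext fun s => hM1 s ‖v‖ hρ
    have hgc : ∀ x : ℝ, Continuous (fun r : ℝ => r * g x r) := fun x =>
      continuous_id.mul (hG.continuous.comp (continuous_const.prodMk continuous_id))
    have hptc : Continuous (fun r : ℝ => r * p t r) :=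
      continuous_id.mul (hpc.comp (continuous_const.prodMk continuous_id))
    obtain ⟨C, hC⟩ : ∃ C, ∀ q ∈ (Metric.closedBall t 1 ×ˢ uIcc (0:ℝ) ‖v‖),
        ‖q.2 * p q.1 q.2‖ ≤ C :=
      ((isCompact_closedBall t 1).prod isCompact_uIcc).exists_bound_of_continuousOn
        ((continuous_snd.mul hpc).continuousOn)
    have key : IntervalIntegrable (fun r => r * p t r) volume 0 ‖v‖ ∧
        HasDerivAt (fun x => ∫ r in (0:ℝ)..‖v‖, r * g x r)
          (∫ r in (0:ℝ)..‖v‖, r * p t r) t := by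
      apply intervalIntegral.hasDerivAt_integral_of_dominated_loc_of_deriv_le
        (F := fun x r => r * g x r) (F' := fun x r => r * p x r)
        (bound := fun _ => C) (s := Metric.ball t 1) (Metric.ball_mem_nhds t one_pos)
      · exact Filter.Eventually.of_forall fun x => ((hgc x).aestronglyMeasurable)
      · exact (hgc t).intervalIntegrable _ _
      · exact hptc.aestronglyMeasurable
      · refine MeasureTheory.ae_of_all _ fun r hr x hx => ?_
        exact hC (x, r) ⟨Metric.ball_subset_closedBall hx, Set.Ioc_subset_Icc_self hr⟩
      · exact intervalIntegrable_const
      · exact MeasureTheory.ae_of_all _ fun r _ x _ => (hp x r).const_mul r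
    have hval : ∫ r in (0:ℝ)..‖v‖, r * p t r = P ‖v‖ := by
      rcases eq_or_lt_of_le hρ with h0 | hpos
      · rw [← h0, intervalIntegral.integral_same, hPdef]
        norm_num
      · have hcontP : ContinuousOn P (Icc 0 ‖v‖) := by
          rw [hPdef]
          exact ((continuous_id.mul hd1smooth.continuous).add
            ((continuous_pow 2).mul (hgt.continuous.mul
              (continuous_const.add hgt.continuous)))).continuousOn
        have := intervalIntegral.integral_eq_sub_of_hasDeriv_right_of_le hρ hcontP
          (fun r hr => (hPd r hr.1).hasDerivWithinAt)
          (hptc.intervalIntegrable _ _)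
        rw [this, hPdef]
        norm_num
    rw [hfun, ← hval]
    exact key.2
  -- time derivative of f at v
  have hft : HasDerivAt (fun s => f s v) (deriv (fun s => f s v) t) t := by
    have : DifferentiableAt ℝ (fun s => f s v) t := by
      have := ((hsm.differentiable (by norm_num)).comp
        (differentiable_id.prodMk (differentiable_const v))) t
      exact this
    exact this.hasDerivAt
  -- LHS
  have hLHS : deriv (fun s => h s v) t =
      (deriv (fun s => f s v) t) * Real.exp (Mbar t ‖v‖)
        + f t v * Real.exp (Mbar t ‖v‖) * P ‖v‖ := by
    have hfun : (fun s => h s v) = fun s => f s v * Real.exp (Mbar s ‖v‖) :=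
      funext fun s => hdef s v
    rw [hfun, HasDerivAt.deriv (f := fun s => f s v * Real.exp (Mbar s ‖v‖)) (hft.mul hMt.exp)]
    ring
  -- first space derivative of h t
  have hfv : ∀ w, HasFDerivAt (f t) (fderiv ℝ (f t) w) w :=
    fun w => ((hfs t).differentiable (by norm_num) w).hasFDerivAt
  have hht : (h t) = fun w => f t w * Real.exp (Mbar t ‖w‖) := funext fun w => hdef t w
  have hhder : ∀ w, HasFDerivAt (h t)
      (f t w • (Real.exp (Mbar t ‖w‖) • ((f t w) • innerSL ℝ w))
        + Real.exp (Mbar t ‖w‖) • fderiv ℝ (f t) w) w := by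
    intro w
    rw [hht]
    exact (hfv w).mul ((hMd w).exp)
  have hdh : ∀ (i : Fin 2) (w : EuclideanSpace ℝ (Fin 2)), fderiv ℝ (h t) w (e i)
      = Real.exp (Mbar t ‖w‖) * fderiv ℝ (f t) w (e i)
        + f t w * f t w * Real.exp (Mbar t ‖w‖) * w i := by
    intro i w
    rw [(hhder w).fderiv]
    simp only [ContinuousLinearMap.add_apply, ContinuousLinearMap.smul_apply,
      smul_eq_mul, innerSL_apply_apply]
    rw [show (inner ℝ w (e i) : ℝ) = w i by
      rw [he, EuclideanSpace.inner_single_right]; simp]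
    ring
  -- abbreviations
  set F : ℝ := f t v with hF
  set Em : ℝ := Real.exp (Mbar t ‖v‖) with hEm
  set a : Fin 2 → ℝ := fun i => fderiv ℝ (f t) v (e i) with ha
  set L : Fin 2 → ℝ := fun i => fderiv ℝ (fun w => fderiv ℝ (f t) w (e i)) v (e i) with hL
  -- second derivative terms of h
  have hE : HasFDerivAt (fun w : EuclideanSpace ℝ (Fin 2) => Real.exp (Mbar t ‖w‖))
      (Real.exp (Mbar t ‖v‖) • ((f t v) • innerSL ℝ v)) v := (hMd v).exp
  have hlap : ∀ i, fderiv ℝ (fun w => fderiv ℝ (h t) w (e i)) v (e i) =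
      (Em * F * (v i)) * a i + Em * L i
        + (2 * F * a i) * Em * (v i) + F * F * (Em * F * (v i)) * (v i) + F * F * Em := by
    intro i
    have hfun_i : (fun w => fderiv ℝ (h t) w (e i))
        = fun w => Real.exp (Mbar t ‖w‖) * fderiv ℝ (f t) w (e i)
            + f t w * f t w * Real.exp (Mbar t ‖w‖) * w i := funext fun w => hdh i w
    have hDi : HasFDerivAt (fun w => fderiv ℝ (f t) w (e i))
        (fderiv ℝ (fun w => fderiv ℝ (f t) w (e i)) v) v :=
      ((hdiff_fderiv i) v).hasFDerivAt
    have htot := (hE.mul hDi).add ((((hfv v).mul (hfv v)).mul hE).mul (hproj i v))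
    rw [hfun_i, HasFDerivAt.fderiv (f := (fun w => Real.exp (Mbar t ‖w‖) * fderiv ℝ (f t) w (e i) + f t w * f t w * Real.exp (Mbar t ‖w‖) * w i)) htot]
    simp only [Pi.mul_apply, ContinuousLinearMap.add_apply, ContinuousLinearMap.smul_apply,
      smul_eq_mul, innerSL_apply_apply]
    rw [show (inner ℝ v (e i) : ℝ) = v i by
      rw [he, EuclideanSpace.inner_single_right]; simp]
    rw [show (EuclideanSpace.proj (𝕜 := ℝ) i) (e i) = 1 by
      rw [he]; simp]
    simp only [ha, hL, hF, hEm]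
    ring
  -- divergence term for h
  have hdivh : ∀ i, fderiv ℝ (fun w : EuclideanSpace ℝ (Fin 2) => w i * h t w) v (e i) =
      F * Em + v i * (Em * a i + F * Em * F * (v i)) := by
    intro i
    have hfun_i : (fun w : EuclideanSpace ℝ (Fin 2) => w i * h t w)
        = fun w => (w i : ℝ) * (f t w * Real.exp (Mbar t ‖w‖)) := by
      funext w; rw [hdef t w]
    have htot := (hproj i v).mul ((hfv v).mul hE)
    rw [hfun_i, HasFDerivAt.fderiv (f := (fun w : EuclideanSpace ℝ (Fin 2) => (w i : ℝ) * (f t w * Real.exp (Mbar t ‖w‖)))) htot]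
    simp only [Pi.mul_apply, ContinuousLinearMap.add_apply, ContinuousLinearMap.smul_apply,
      smul_eq_mul, innerSL_apply_apply]
    rw [show (inner ℝ v (e i) : ℝ) = v i by
      rw [he, EuclideanSpace.inner_single_right]; simp]
    rw [show (EuclideanSpace.proj (𝕜 := ℝ) i) (e i) = 1 by
      rw [he]; simp]
    simp only [ha, hF, hEm]
    ring
  -- divergence term for f(1+f)
  have hdivf : ∀ i, fderiv ℝ (fun w : EuclideanSpace ℝ (Fin 2) => w i * f t w * (1 + f t w)) v (e i) =
      (F + v i * a i) * (1 + F) + (v i * F) * a i := by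
    intro i
    have htot := (((hproj i v).mul (hfv v)).mul ((hfv v).const_add 1))
    rw [HasFDerivAt.fderiv (f := (fun w : EuclideanSpace ℝ (Fin 2) => w i * f t w * (1 + f t w))) htot]
    simp only [Pi.mul_apply, ContinuousLinearMap.add_apply, ContinuousLinearMap.smul_apply,
      smul_eq_mul, innerSL_apply_apply]
    rw [show (EuclideanSpace.proj (𝕜 := ℝ) i) (e i) = 1 by
      rw [he]; simp]
    simp only [ha, hF, hEm]
    ring
  -- radial sums
  have hN : ‖v‖^2 = (v 0)^2 + (v 1)^2 := by
    rw [EuclideanSpace.norm_eq, Real.sq_sqrt (by positivity)]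
    rw [Fin.sum_univ_two]
    simp [sq_abs]
  have hS : ‖v‖ * d1 ‖v‖ = v 0 * a 0 + v 1 * a 1 := by
    rcases eq_or_ne v 0 with hv | hv
    · subst hv
      simp
    · have hne : ‖v‖ ≠ 0 := norm_ne_zero_iff.mpr hv
      have hai : ∀ i : Fin 2, a i = d1 ‖v‖ * (‖v‖⁻¹ * v i) := by
        intro i
        rw [ha]
        simp only
        rw [hfderiv v hv]
        simp only [ContinuousLinearMap.smul_apply, smul_eq_mul, innerSL_apply_apply]
        rw [show (inner ℝ v (e i) : ℝ) = v i by
          rw [he, EuclideanSpace.inner_single_right]; simp]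
      rw [hai 0, hai 1]
      have h2 : v 0 * (d1 ‖v‖ * (‖v‖⁻¹ * v 0)) + v 1 * (d1 ‖v‖ * (‖v‖⁻¹ * v 1))
          = d1 ‖v‖ * ‖v‖⁻¹ * (‖v‖^2) := by
        rw [hN]; ring
      rw [h2]
      field_simp
  have hFg : g t ‖v‖ = F := (hrad t v).symm
  -- assemble
  have hpde' := hpde t ht v
  have hl0 := hlap 0
  have hl1 := hlap 1
  have hh0 := hdivh 0
  have hh1 := hdivh 1
  have hf0 := hdivf 0
  have hf1 := hdivf 1
  simp only [hL, ha, hF, hEm, he, hPdef] at hl0 hl1 hh0 hh1 hf0 hf1 hS hN hFg hLHS hpde' ⊢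
  rw [hLHS, hpde']
  rw [Fin.sum_univ_two, Fin.sum_univ_two, Fin.sum_univ_two, Fin.sum_univ_two]
  rw [hl0, hl1, hh0, hh1, hf0, hf1, hN, hS, hFg]
  ring
end

section
/- Entropy formula under the inverse-cdf change of variables: if f : [−R₁,R₁] → (0,∞) is continuous with ∫_{−R₁}^{R₁} f = m, M(v) = ∫_{−R₁}^v f, and u = M^{−1} : [0,m] → [−R₁,R₁], then ∫_{−R₁}^{R₁} (v²/2 · f(v) + Φ(f(v))) dv = ∫₀^m (u(x)²/2 + Ψ(u'(x))) dx, where Ψ(s) = sΦ(1/s). -/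
/-! The substitution `v = u x` has `dv = u' x dx = dx / f (u x)`, so it turns `∫ G(v) dv` with
`G v = v²/2 · f v + Φ (f v)` into `∫ G (u x) / f (u x) dx = ∫ (u x ²/2 + Ψ (u' x)) dx`. The only
analytic input beyond the chain rule is that `Φ` is continuous, i.e. that the logarithmic
singularity of its integrand at `0` is integrable. -/

open MeasureTheory Real Set intervalIntegral

theorem intervalIntegrable_log_rpow_div_one_add_rpow {γ t : ℝ} (hγ : 0 ≤ γ) (ht : 0 ≤ t) :
    IntervalIntegrable (fun s => log (s ^ γ / (1 + s ^ γ))) volume 0 t := by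
  have hlog_one_add : IntervalIntegrable (fun s : ℝ => log (1 + s ^ γ)) volume 0 t := by
    refine ContinuousOn.intervalIntegrable ?_
    refine (continuous_const.add (continuous_rpow_const hγ)).continuousOn.log fun s hs => ?_
    rw [uIcc_of_le ht] at hs
    show 1 + s ^ γ ≠ 0
    linarith [rpow_nonneg hs.1 γ]
  refine ((intervalIntegrable_log'.const_mul γ).sub hlog_one_add).congr fun s hs => ?_
  rw [uIoc_of_le ht] at hs
  have hs0 : 0 < s := hs.1
  rw [log_div (rpow_pos_of_pos hs0 γ).ne' (by positivity), log_rpow hs0]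

theorem continuousOn_integral_log_rpow_div_one_add_rpow {γ : ℝ} (hγ : 0 ≤ γ) :
    ContinuousOn (fun t => ∫ s in (0 : ℝ)..t, log (s ^ γ / (1 + s ^ γ))) (Ici 0) := by
  intro t ht
  have hcont : ContinuousOn (fun t => ∫ s in (0 : ℝ)..t, log (s ^ γ / (1 + s ^ γ)))
      (Icc 0 (t + 1)) := by
    rw [← uIcc_of_le (by linarith [mem_Ici.1 ht])]
    exact continuousOn_primitive_interval'
      (intervalIntegrable_log_rpow_div_one_add_rpow hγ (by linarith [mem_Ici.1 ht]))
      left_mem_uIcc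
  refine (hcont t ⟨ht, by linarith⟩).mono_of_mem_nhdsWithin ?_
  rw [← Ici_inter_Iic]
  exact inter_mem_nhdsWithin _ (Iic_mem_nhds (by linarith))

theorem integral_eq_integral_comp_div_of_hasDerivAt_one_div {f u G : ℝ → ℝ} {a b m : ℝ}
    (hm : 0 ≤ m) (hf : ContinuousOn f (Icc a b)) (hf0 : ∀ v ∈ Icc a b, f v ≠ 0)
    (hG : ContinuousOn G (Icc a b)) (hmaps : MapsTo u (Icc 0 m) (Icc a b))
    (hu' : ∀ x ∈ Icc 0 m, HasDerivAt u (1 / f (u x)) x) :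
    ∫ v in u 0..u m, G v = ∫ x in 0..m, G (u x) / f (u x) := by
  rw [← uIcc_of_le hm] at hmaps hu'
  have hdu : ContinuousOn (fun x => 1 / f (u x)) (uIcc 0 m) :=
    continuousOn_const.div (hf.comp (fun x hx => (hu' x hx).continuousAt.continuousWithinAt)
      hmaps) fun x hx => hf0 _ (hmaps hx)
  simp only [← integral_comp_mul_deriv' hu' hdu (hG.mono hmaps.image_subset),
    Function.comp_apply, mul_one_div]

theorem stmt_17_general (γ R₁ m : ℝ) (hγ : 0 < γ) (hR₁ : 0 < R₁) (hm : 0 < m)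
    (Φ Ψ : ℝ → ℝ)
    (hΦ : ∀ f : ℝ, Φ f = (1 / γ) * ∫ s in (0:ℝ)..f, Real.log (s ^ γ / (1 + s ^ γ)))
    (hΨ : ∀ s : ℝ, 0 < s → Ψ s = s * Φ (1 / s))
    (f : ℝ → ℝ) (hf : ContinuousOn f (Set.Icc (-R₁) R₁))
    (hfpos : ∀ v ∈ Set.Icc (-R₁) R₁, 0 < f v)
    (hmass : ∫ v in (-R₁)..R₁, f v = m)
    (M : ℝ → ℝ) (hM : ∀ v, M v = ∫ w in (-R₁)..v, f w)
    (u : ℝ → ℝ)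
    (hMu : ∀ v ∈ Set.Icc (-R₁) R₁, u (M v) = v)
    (hmono : StrictMonoOn u (Set.Icc 0 m))
    (hu' : ∀ x ∈ Set.Icc 0 m, HasDerivAt u (1 / f (u x)) x) :
    ∫ v in (-R₁)..R₁, (v ^ 2 / 2 * f v + Φ (f v)) =
      ∫ x in (0:ℝ)..m, ((u x) ^ 2 / 2 + Ψ (deriv u x)) := by
  have hu0 : u 0 = -R₁ := by
    simpa [hM] using hMu (-R₁) ⟨le_rfl, by linarith⟩
  have hum : u m = R₁ := by
    simpa [hM, hmass] using hMu R₁ ⟨by linarith, le_rfl⟩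
  have hmaps : MapsTo u (Icc 0 m) (Icc (-R₁) R₁) := hu0 ▸ hum ▸ hmono.monotoneOn.mapsTo_Icc
  have hΦcont : ContinuousOn Φ (Ioi 0) := by
    rw [funext hΦ]
    exact (continuousOn_const.mul (continuousOn_integral_log_rpow_div_one_add_rpow hγ.le)).mono
      Ioi_subset_Ici_self
  have hG : ContinuousOn (fun v => v ^ 2 / 2 * f v + Φ (f v)) (Icc (-R₁) R₁) :=
    ((continuousOn_id.pow 2).div_const 2 |>.mul hf).add (hΦcont.comp hf hfpos)
  rw [← hu0, ← hum, integral_eq_integral_comp_div_of_hasDerivAt_one_div hm.le hf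
    (fun v hv => (hfpos v hv).ne') hG hmaps hu']
  refine integral_congr fun x hx => ?_
  rw [uIcc_of_le hm.le] at hx
  have hfx : 0 < f (u x) := hfpos _ (hmaps hx)
  rw [(hu' x hx).deriv, hΨ _ (one_div_pos.2 hfx), one_div_one_div]
  field_simp

theorem stmt_17 (γ R₁ m : ℝ) (hγ : 0 < γ) (hR₁ : 0 < R₁) (hm : 0 < m)
    (Φ Ψ : ℝ → ℝ)
    (hΦ : ∀ f : ℝ, Φ f = (1 / γ) * ∫ s in (0:ℝ)..f, Real.log (s ^ γ / (1 + s ^ γ)))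
    (hΨ : ∀ s : ℝ, 0 < s → Ψ s = s * Φ (1 / s))
    (f : ℝ → ℝ) (hf : ContinuousOn f (Set.Icc (-R₁) R₁))
    (hfpos : ∀ v ∈ Set.Icc (-R₁) R₁, 0 < f v)
    (hmass : ∫ v in (-R₁)..R₁, f v = m)
    (M : ℝ → ℝ) (hM : ∀ v, M v = ∫ w in (-R₁)..v, f w)
    (u : ℝ → ℝ)
    (huM : ∀ x ∈ Set.Icc 0 m, M (u x) = x)
    (hMu : ∀ v ∈ Set.Icc (-R₁) R₁, u (M v) = v)
    (hmono : StrictMonoOn u (Set.Icc 0 m))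
    (hu' : ∀ x ∈ Set.Icc 0 m, HasDerivAt u (1 / f (u x)) x) :
    ∫ v in (-R₁)..R₁, (v ^ 2 / 2 * f v + Φ (f v)) =
      ∫ x in (0:ℝ)..m, ((u x) ^ 2 / 2 + Ψ (deriv u x)) :=
  stmt_17_general γ R₁ m hγ hR₁ hm Φ Ψ hΦ hΨ f hf hfpos hmass M hM u hMu hmono hu'
end
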